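/- arXiv:2310.03546 — 2 statements merged into one kernel-verified Lean document; each statement's English description precedes it below -/
import Mathlib

section
/- For two probability measures π₁, π₂ on ℝ^d with fourth moments bounded by M₄, second moments by M₂, and first moments by M₁, the difference of the traces of their second moments satisfies |E_{π₁}[‖X‖²] - ‖E_{π₁}[X]‖² - E_{π₂}[‖Y‖²] + ‖E_{π₂}[Y]‖²| ≤ (√(2M₄) + 2√(2M₂)·M₁)·‖π₁ - π₂‖_TV^{1/2}. -/
/-!
Each side is a total variance `V(π) = ∫ ‖x - m_π‖² dπ`, and `∫ ‖x - c‖² dπ = V(π) + ‖m_π - c‖²`.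
Hence `V(π₁) - V(π₂) ≤ ∫ h dπ₁ - ∫ h dπ₂` for `h = ‖· - m₂‖²`. As `h ≥ 0`, on a Hahn
decomposition of `π₁ - π₂` this difference is at most `∫ h dρ` for the positive part `ρ ≤ π₁`,
whose mass is at most `tvDist π₁ π₂`, and Cauchy–Schwarz bounds it by
`√(∫ h² dπ₁) · √(tvDist π₁ π₂)`. Finally `∫ h² dπ₁ ≤ ∫ (‖x‖ + ‖m₂‖)⁴ dπ₁` is expanded binomially,
each term being controlled by the moment bounds, Cauchy–Schwarz for the third moment and
Jensen's inequality `‖m₂‖ᵏ ≤ ∫ ‖y‖ᵏ dπ₂`. The other direction is symmetric.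
-/

open MeasureTheory

/-- Total variation distance, normalized as `sup_A |π₁(A) - π₂(A)|`. -/
noncomputable def tvDist {α : Type*} [MeasurableSpace α] (π₁ π₂ : Measure α) : ℝ :=
  sSup {r | ∃ A : Set α, MeasurableSet A ∧ r = |(π₁ A).toReal - (π₂ A).toReal|}

lemma integral_mul_le_sqrt_mul_sqrt {α : Type*} [MeasurableSpace α] {μ : Measure α}
    {f g : α → ℝ} (hf0 : 0 ≤ᵐ[μ] f) (hg0 : 0 ≤ᵐ[μ] g) (hf : MemLp f 2 μ) (hg : MemLp g 2 μ) :
    ∫ x, f x * g x ∂μ ≤ √(∫ x, f x ^ 2 ∂μ) * √(∫ x, g x ^ 2 ∂μ) := by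
  have := integral_mul_le_Lp_mul_Lq_of_nonneg Real.HolderConjugate.two_two hf0 hg0
    (by simpa using hf) (by simpa using hg)
  simpa [Real.sqrt_eq_rpow] using this

section TotalVariation

variable {α : Type*} [MeasurableSpace α] {μ ν : Measure α}

lemma tvDist_comm (μ ν : Measure α) : tvDist μ ν = tvDist ν μ := by
  simp only [tvDist, abs_sub_comm]

variable [IsFiniteMeasure μ] [IsFiniteMeasure ν]

lemma abs_measure_sub_le_tvDist {A : Set α} (hA : MeasurableSet A) :
    |(μ A).toReal - (ν A).toReal| ≤ tvDist μ ν := by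
  refine le_csSup ⟨μ.real Set.univ + ν.real Set.univ, ?_⟩ ⟨A, hA, rfl⟩
  rintro r ⟨B, -, rfl⟩
  calc |μ.real B - ν.real B| ≤ |μ.real B| + |ν.real B| := abs_sub _ _
    _ ≤ μ.real Set.univ + ν.real Set.univ := by
      rw [abs_of_nonneg measureReal_nonneg, abs_of_nonneg measureReal_nonneg]
      exact add_le_add (measureReal_mono B.subset_univ) (measureReal_mono B.subset_univ)

theorem integral_sub_integral_le_sqrt_mul_sqrt_tvDist {h : α → ℝ} (h0 : 0 ≤ h)
    (hμ : MemLp h 2 μ) (hν : Integrable h ν) :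
    ∫ x, h x ∂μ - ∫ x, h x ∂ν ≤ √(∫ x, h x ^ 2 ∂μ) * √(tvDist μ ν) := by
  obtain ⟨s, hs, hνμ, hμν⟩ := hahn_decomposition μ ν
  have hle : ν.restrict s ≤ μ.restrict s := Measure.le_iff.2 fun t ht => by
    simpa [Measure.restrict_apply ht] using hνμ _ (ht.inter hs) Set.inter_subset_right
  have hle' : μ.restrict sᶜ ≤ ν.restrict sᶜ := Measure.le_iff.2 fun t ht => by
    simpa [Measure.restrict_apply ht] using hμν _ (ht.inter hs.compl) Set.inter_subset_right
  set ρ := μ.restrict s - ν.restrict s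
  have hρμ : ρ ≤ μ := Measure.sub_le.trans Measure.restrict_le_self
  have hμi : Integrable h μ := hμ.integrable one_le_two
  have reduce_to_ρ : ∫ x, h x ∂μ - ∫ x, h x ∂ν ≤ ∫ x, h x ∂ρ := by
    have hc : ∫ x in sᶜ, h x ∂μ ≤ ∫ x in sᶜ, h x ∂ν :=
      integral_mono_measure hle' (ae_of_all _ h0) hν.restrict
    rw [← integral_add_compl hs hμi, ← integral_add_compl hs hν,
      ← Measure.sub_add_cancel_of_le hle, integral_add_measure (hμi.mono_measure hρμ) hν.restrict]
    linarith
  have cauchy_schwarz : ∫ x, h x ∂ρ ≤ √(ρ.real Set.univ) * √(∫ x, h x ^ 2 ∂ρ) := by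
    simpa using integral_mul_le_sqrt_mul_sqrt (ae_of_all _ fun _ => zero_le_one)
      (ae_of_all _ h0) (memLp_const 1) (hμ.mono_measure hρμ)
  have mass_le : ρ.real Set.univ ≤ tvDist μ ν := by
    rw [measureReal_def, Measure.sub_apply MeasurableSet.univ hle, Measure.restrict_apply_univ,
      Measure.restrict_apply_univ,
      ENNReal.toReal_sub_of_le (hνμ s hs le_rfl) (measure_ne_top _ _)]
    exact (le_abs_self _).trans (abs_measure_sub_le_tvDist hs)
  have moment_le : ∫ x, h x ^ 2 ∂ρ ≤ ∫ x, h x ^ 2 ∂μ :=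
    integral_mono_measure hρμ (ae_of_all _ fun x => sq_nonneg (h x)) hμ.integrable_sq
  calc ∫ x, h x ∂μ - ∫ x, h x ∂ν ≤ √(ρ.real Set.univ) * √(∫ x, h x ^ 2 ∂ρ) :=
        reduce_to_ρ.trans cauchy_schwarz
    _ ≤ √(∫ x, h x ^ 2 ∂μ) * √(tvDist μ ν) := by
      rw [mul_comm]; gcongr

end TotalVariation

section Moments

variable {α : Type*} [MeasurableSpace α] {μ : Measure α}
  {E : Type*} [NormedAddCommGroup E] {f : α → E}

lemma MeasureTheory.MemLp.integrable_norm_pow_of_le [IsFiniteMeasure μ] {p k : ℕ}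
    (hf : MemLp f p μ) (hk : k ≤ p) : Integrable (fun x => ‖f x‖ ^ k) μ :=
  MeasureTheory.integrable_norm_pow_of_le hf.aestronglyMeasurable hk hf.integrable_norm_pow'

lemma MeasureTheory.MemLp.norm_sq (hf : MemLp f 4 μ) : MemLp (fun x => ‖f x‖ ^ 2) 2 μ :=
  (memLp_two_iff_integrable_sq (f := fun x => ‖f x‖ ^ 2) (hf.aestronglyMeasurable.norm.pow 2)).2 <|
    by simpa only [← pow_mul] using hf.integrable_norm_pow (p := 4) four_ne_zero

lemma norm_integral_pow_le [NormedSpace ℝ E] [IsProbabilityMeasure μ] (hf : Integrable f μ)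
    (n : ℕ) (hfn : Integrable (fun x => ‖f x‖ ^ n) μ) :
    ‖∫ x, f x ∂μ‖ ^ n ≤ ∫ x, ‖f x‖ ^ n ∂μ :=
  (pow_le_pow_left₀ (norm_nonneg _) (norm_integral_le_integral_norm f) n).trans <|
    (convexOn_pow n).map_integral_le (continuous_pow n).continuousOn isClosed_Ici
      (ae_of_all _ fun x => norm_nonneg (f x)) hf.norm hfn

lemma integral_norm_pow_three_le [IsFiniteMeasure μ] (hf : MemLp f 4 μ) :
    ∫ x, ‖f x‖ ^ 3 ∂μ ≤ √(∫ x, ‖f x‖ ^ 2 ∂μ) * √(∫ x, ‖f x‖ ^ 4 ∂μ) := by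
  have := integral_mul_le_sqrt_mul_sqrt (ae_of_all _ fun x => norm_nonneg (f x))
    (ae_of_all _ fun x => by positivity) (hf.mono_exponent (by norm_num)).norm hf.norm_sq
  simpa only [← pow_succ', ← pow_mul] using this

lemma integral_norm_sub_pow_four_le [IsProbabilityMeasure μ] (hf : MemLp f 4 μ) (c : E) :
    ∫ x, ‖f x - c‖ ^ 4 ∂μ ≤ ∫ x, ‖f x‖ ^ 4 ∂μ + 4 * ‖c‖ * ∫ x, ‖f x‖ ^ 3 ∂μ
      + 6 * ‖c‖ ^ 2 * ∫ x, ‖f x‖ ^ 2 ∂μ + 4 * ‖c‖ ^ 3 * ∫ x, ‖f x‖ ∂μ + ‖c‖ ^ 4 := by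
  have h1 : Integrable (fun x => ‖f x‖) μ := by
    simpa using hf.integrable_norm_pow_of_le (p := 4) (k := 1) (by norm_num)
  have h2 := hf.integrable_norm_pow_of_le (p := 4) (k := 2) (by norm_num)
  have h3 := hf.integrable_norm_pow_of_le (p := 4) (k := 3) (by norm_num)
  have h4 := hf.integrable_norm_pow_of_le (p := 4) (k := 4) le_rfl
  calc ∫ x, ‖f x - c‖ ^ 4 ∂μ
      ≤ ∫ x, (‖f x‖ ^ 4 + 4 * ‖c‖ * ‖f x‖ ^ 3 + 6 * ‖c‖ ^ 2 * ‖f x‖ ^ 2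
          + 4 * ‖c‖ ^ 3 * ‖f x‖ + ‖c‖ ^ 4) ∂μ := by
        refine integral_mono ((hf.sub (memLp_const c)).integrable_norm_pow_of_le (p := 4) le_rfl)
          (by fun_prop) fun x => ?_
        calc ‖f x - c‖ ^ 4 ≤ (‖f x‖ + ‖c‖) ^ 4 := by gcongr; exact norm_sub_le _ _
          _ = _ := by ring
    _ = _ := by
        rw [integral_add (by fun_prop) (by fun_prop), integral_add (by fun_prop) (by fun_prop),
          integral_add (by fun_prop) (by fun_prop), integral_add (by fun_prop) (by fun_prop)]
        simp only [integral_const_mul, integral_const, probReal_univ, one_smul]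

end Moments

lemma binomial_moment_bound {γ m₁ m₂ m₃ m₄ M₁ M₂ M₄ : ℝ} (hγ : 0 ≤ γ) (hγ₁ : γ ≤ M₁)
    (hγ₂ : γ ^ 2 ≤ M₂) (hγ₄ : γ ^ 4 ≤ M₄) (hm₁ : m₁ ≤ M₁) (hm₂ : m₂ ≤ M₂)
    (hm₃ : m₃ ≤ √m₂ * √m₄) (hm₄ : m₄ ≤ M₄) :
    m₄ + 4 * γ * m₃ + 6 * γ ^ 2 * m₂ + 4 * γ ^ 3 * m₁ + γ ^ 4
      ≤ (√(2 * M₄) + 2 * √(2 * M₂) * M₁) ^ 2 := by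
  have hM₁ : 0 ≤ M₁ := hγ.trans hγ₁
  have hM₂ : 0 ≤ M₂ := (sq_nonneg γ).trans hγ₂
  have hM₄ : 0 ≤ M₄ := (by positivity : (0 : ℝ) ≤ γ ^ 4).trans hγ₄
  have hab : 0 ≤ √M₂ * √M₄ := by positivity
  have hm₃' : m₃ ≤ √M₂ * √M₄ := hm₃.trans <| mul_le_mul (Real.sqrt_le_sqrt hm₂)
    (Real.sqrt_le_sqrt hm₄) (Real.sqrt_nonneg _) (Real.sqrt_nonneg _)
  have hγ₃ : γ ^ 3 ≤ √M₂ * √M₄ := by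
    rw [pow_succ']
    exact mul_le_mul (Real.le_sqrt_of_sq_le hγ₂)
      (Real.le_sqrt_of_sq_le (by rwa [← pow_mul])) (by positivity) (Real.sqrt_nonneg _)
  have t₁ : γ * m₃ ≤ M₁ * (√M₂ * √M₄) :=
    (mul_le_mul_of_nonneg_left hm₃' hγ).trans (mul_le_mul_of_nonneg_right hγ₁ hab)
  have t₂ : γ ^ 2 * m₂ ≤ M₁ ^ 2 * M₂ :=
    (mul_le_mul_of_nonneg_left hm₂ (sq_nonneg γ)).trans
      (mul_le_mul_of_nonneg_right (pow_le_pow_left₀ hγ hγ₁ 2) hM₂)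
  have t₃ : γ ^ 3 * m₁ ≤ (√M₂ * √M₄) * M₁ :=
    (mul_le_mul_of_nonneg_left hm₁ (by positivity)).trans (mul_le_mul_of_nonneg_right hγ₃ hM₁)
  have expand : (√(2 * M₄) + 2 * √(2 * M₂) * M₁) ^ 2
      = 2 * M₄ + 8 * M₁ * (√M₂ * √M₄) + 8 * M₁ ^ 2 * M₂ := by
    rw [Real.sqrt_mul zero_le_two, Real.sqrt_mul zero_le_two]
    ring_nf
    rw [Real.sq_sqrt zero_le_two, Real.sq_sqrt hM₂, Real.sq_sqrt hM₄]
    ring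
  rw [expand]
  linarith [mul_nonneg (sq_nonneg M₁) hM₂]

lemma integral_norm_sub_integral_pow_four_le {E : Type*} [NormedAddCommGroup E]
    [NormedSpace ℝ E] [MeasurableSpace E] {μ ν : Measure E} [IsProbabilityMeasure μ]
    [IsProbabilityMeasure ν] {M₁ M₂ M₄ : ℝ}
    (hμ : MemLp (fun x => x) 4 μ) (hν : MemLp (fun x => x) 4 ν)
    (h1μ : ∫ x, ‖x‖ ∂μ ≤ M₁) (h1ν : ∫ x, ‖x‖ ∂ν ≤ M₁)
    (h2μ : ∫ x, ‖x‖ ^ 2 ∂μ ≤ M₂) (h2ν : ∫ x, ‖x‖ ^ 2 ∂ν ≤ M₂)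
    (h4μ : ∫ x, ‖x‖ ^ 4 ∂μ ≤ M₄) (h4ν : ∫ x, ‖x‖ ^ 4 ∂ν ≤ M₄) :
    ∫ x, ‖x - ∫ y, y ∂ν‖ ^ 4 ∂μ ≤ (√(2 * M₄) + 2 * √(2 * M₂) * M₁) ^ 2 := by
  have hνi : Integrable (fun x : E => x) ν := hν.integrable (by norm_num)
  have jensen (k : ℕ) (hk : k ≤ 4) : ‖∫ y, y ∂ν‖ ^ k ≤ ∫ y, ‖y‖ ^ k ∂ν :=
    norm_integral_pow_le hνi k (hν.integrable_norm_pow_of_le (p := 4) hk)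
  exact (integral_norm_sub_pow_four_le hμ _).trans <| binomial_moment_bound (norm_nonneg _)
    ((norm_integral_le_integral_norm _).trans h1ν) ((jensen 2 (by norm_num)).trans h2ν)
    ((jensen 4 le_rfl).trans h4ν) h1μ h2μ (integral_norm_pow_three_le hμ) h4μ

section Variance

variable {E : Type*} [NormedAddCommGroup E] [InnerProductSpace ℝ E] [CompleteSpace E]
  [MeasurableSpace E] {μ ν : Measure E} [IsProbabilityMeasure μ] [IsProbabilityMeasure ν]

lemma integral_norm_sub_sq (hμ : MemLp (fun x => x) 2 μ) (c : E) :
    ∫ x, ‖x - c‖ ^ 2 ∂μ = (∫ x, ‖x‖ ^ 2 ∂μ - ‖∫ x, x ∂μ‖ ^ 2) + ‖∫ x, x ∂μ - c‖ ^ 2 := by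
  have hi : Integrable (fun x : E => x) μ := hμ.integrable one_le_two
  have h2 : Integrable (fun x : E => ‖x‖ ^ 2) μ := hμ.integrable_norm_pow two_ne_zero
  have hlin : Integrable (fun x => 2 * inner ℝ c x) μ := (hi.const_inner c).const_mul 2
  have expand (x : E) : ‖x - c‖ ^ 2 = ‖x‖ ^ 2 - 2 * inner ℝ c x + ‖c‖ ^ 2 := by
    rw [norm_sub_sq_real, real_inner_comm]
  simp_rw [expand]
  rw [integral_add (f := fun x => ‖x‖ ^ 2 - 2 * inner ℝ c x) (h2.sub hlin) (integrable_const _),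
    integral_sub h2 hlin, integral_const_mul, integral_inner hi, integral_const, probReal_univ,
    one_smul]
  ring

lemma variance_sub_le (hμ : MemLp (fun x => x) 2 μ) (hν : MemLp (fun x => x) 2 ν) :
    (∫ x, ‖x‖ ^ 2 ∂μ - ‖∫ x, x ∂μ‖ ^ 2) - (∫ x, ‖x‖ ^ 2 ∂ν - ‖∫ x, x ∂ν‖ ^ 2)
      ≤ ∫ x, ‖x - ∫ y, y ∂ν‖ ^ 2 ∂μ - ∫ x, ‖x - ∫ y, y ∂ν‖ ^ 2 ∂ν := by
  rw [integral_norm_sub_sq hμ, integral_norm_sub_sq hν, sub_self, norm_zero]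
  linarith [sq_nonneg ‖∫ x, x ∂μ - ∫ y, y ∂ν‖]

theorem variance_sub_le_of_moments {M₁ M₂ M₄ : ℝ}
    (hμ : MemLp (fun x => x) 4 μ) (hν : MemLp (fun x => x) 4 ν)
    (h1μ : ∫ x, ‖x‖ ∂μ ≤ M₁) (h1ν : ∫ x, ‖x‖ ∂ν ≤ M₁)
    (h2μ : ∫ x, ‖x‖ ^ 2 ∂μ ≤ M₂) (h2ν : ∫ x, ‖x‖ ^ 2 ∂ν ≤ M₂)
    (h4μ : ∫ x, ‖x‖ ^ 4 ∂μ ≤ M₄) (h4ν : ∫ x, ‖x‖ ^ 4 ∂ν ≤ M₄) :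
    (∫ x, ‖x‖ ^ 2 ∂μ - ‖∫ x, x ∂μ‖ ^ 2) - (∫ x, ‖x‖ ^ 2 ∂ν - ‖∫ x, x ∂ν‖ ^ 2)
      ≤ (√(2 * M₄) + 2 * √(2 * M₂) * M₁) * √(tvDist μ ν) := by
  set c := ∫ y, y ∂ν
  have hM₁ : 0 ≤ M₁ := (integral_nonneg fun x => norm_nonneg x).trans h1μ
  have hμ2 : MemLp (fun x => x) 2 μ := hμ.mono_exponent (by norm_num)
  have hν2 : MemLp (fun x => x) 2 ν := hν.mono_exponent (by norm_num)
  have hh : MemLp (fun x => ‖x - c‖ ^ 2) 2 μ := (hμ.sub (memLp_const c)).norm_sq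
  have fourth : √(∫ x, (‖x - c‖ ^ 2) ^ 2 ∂μ) ≤ √(2 * M₄) + 2 * √(2 * M₂) * M₁ := by
    rw [Real.sqrt_le_left (by positivity)]
    simpa only [← pow_mul] using
      integral_norm_sub_integral_pow_four_le hμ hν h1μ h1ν h2μ h2ν h4μ h4ν
  calc _ ≤ ∫ x, ‖x - c‖ ^ 2 ∂μ - ∫ x, ‖x - c‖ ^ 2 ∂ν := variance_sub_le hμ2 hν2
    _ ≤ √(∫ x, (‖x - c‖ ^ 2) ^ 2 ∂μ) * √(tvDist μ ν) :=
      integral_sub_integral_le_sqrt_mul_sqrt_tvDist (fun x => by positivity) hh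
        (hν2.sub (memLp_const c) |>.integrable_norm_pow two_ne_zero)
    _ ≤ _ := by gcongr

end Variance

theorem variance_diff_le_tv_sqrt {d : ℕ}
    (π₁ π₂ : Measure (EuclideanSpace ℝ (Fin d)))
    [IsProbabilityMeasure π₁] [IsProbabilityMeasure π₂] (M₁ M₂ M₄ : ℝ)
    (hL₁ : MemLp (fun x => x) 4 π₁) (hL₂ : MemLp (fun x => x) 4 π₂)
    (h1₁ : ∫ x, ‖x‖ ∂π₁ ≤ M₁) (h1₂ : ∫ x, ‖x‖ ∂π₂ ≤ M₁)
    (h2₁ : ∫ x, ‖x‖ ^ 2 ∂π₁ ≤ M₂) (h2₂ : ∫ x, ‖x‖ ^ 2 ∂π₂ ≤ M₂)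
    (h4₁ : ∫ x, ‖x‖ ^ 4 ∂π₁ ≤ M₄) (h4₂ : ∫ x, ‖x‖ ^ 4 ∂π₂ ≤ M₄) :
    |((∫ x, ‖x‖ ^ 2 ∂π₁) - ‖∫ x, x ∂π₁‖ ^ 2) - ((∫ y, ‖y‖ ^ 2 ∂π₂) - ‖∫ y, y ∂π₂‖ ^ 2)|
      ≤ (Real.sqrt (2 * M₄) + 2 * Real.sqrt (2 * M₂) * M₁) * Real.sqrt (tvDist π₁ π₂) := by
  refine abs_sub_le_iff.2 ⟨?_, ?_⟩
  · exact variance_sub_le_of_moments hL₁ hL₂ h1₁ h1₂ h2₁ h2₂ h4₁ h4₂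
  · rw [tvDist_comm]
    exact variance_sub_le_of_moments hL₂ hL₁ h1₂ h1₁ h2₂ h2₁ h4₂ h4₁
end

section
/- Tweedie's formula: let p be a probability density on ℝ^d with finite first moment, and let p_ε(z) = ∫ p(x)·(2πε²)^{-d/2}·exp(-‖z-x‖²/(2ε²)) dx be its Gaussian smoothing. Then ∇ log p_ε(z) = (D_ε(z) - z)/ε², where D_ε(z) = ∫ x·p(x)·exp(-‖z-x‖²/(2ε²)) dx / ∫ p(x)·exp(-‖z-x‖²/(2ε²)) dx is the MMSE denoiser (posterior mean of x given z = x + ε·noise). -/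
open MeasureTheory

/-! With `g z = ∫ p x * exp (-‖z - x‖² / (2ε²)) dx` we have `p_ε = C * g` for a constant `C > 0`.
Differentiating under the integral sign, which is legitimate because for `w` near `z` the
derivative is dominated by `ε⁻² (‖x‖ + ‖z‖ + 1) p x` (integrable by the first-moment assumption),
gives `∇g z = ε⁻² (∫ x p x exp(…) dx - g z • z)`; dividing by `g z > 0` yields `∇ log p_ε`. -/

/-- Gaussian smoothing of a density `p` at noise level `ε`. -/
noncomputable def smoothedDensity {d : ℕ} (p : EuclideanSpace ℝ (Fin d) → ℝ) (ε : ℝ)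
    (z : EuclideanSpace ℝ (Fin d)) : ℝ :=
  ∫ x, p x * ((2 * Real.pi * ε ^ 2) ^ (-(d : ℝ) / 2) * Real.exp (-‖z - x‖ ^ 2 / (2 * ε ^ 2)))

/-- The MMSE denoiser: posterior mean of `x` given `z = x + ε · noise`. -/
noncomputable def mmseDenoiser {d : ℕ} (p : EuclideanSpace ℝ (Fin d) → ℝ) (ε : ℝ)
    (z : EuclideanSpace ℝ (Fin d)) : EuclideanSpace ℝ (Fin d) :=
  (∫ x, p x * Real.exp (-‖z - x‖ ^ 2 / (2 * ε ^ 2)))⁻¹ •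
    ∫ x, (p x * Real.exp (-‖z - x‖ ^ 2 / (2 * ε ^ 2))) • x

section Gradient

variable {F : Type*} [NormedAddCommGroup F] [InnerProductSpace ℝ F] [CompleteSpace F]
  {f : F → ℝ} {f' x : F}

theorem HasGradientAt.const_mul (h : HasGradientAt f f' x) (c : ℝ) :
    HasGradientAt (fun y => c * f y) (c • f') x := by
  rw [hasGradientAt_iff_hasFDerivAt] at h ⊢
  simpa using h.const_mul c

theorem HasGradientAt.log (h : HasGradientAt f f' x) (hx : f x ≠ 0) :
    HasGradientAt (fun y => Real.log (f y)) ((f x)⁻¹ • f') x := by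
  rw [hasGradientAt_iff_hasFDerivAt] at h ⊢
  simpa using h.log hx

end Gradient

section GaussianWeight

variable {E : Type*} [NormedAddCommGroup E]

noncomputable def gaussianWeight (ε : ℝ) (z x : E) : ℝ :=
  Real.exp (-‖z - x‖ ^ 2 / (2 * ε ^ 2))

theorem gaussianWeight_pos (ε : ℝ) (z x : E) : 0 < gaussianWeight ε z x :=
  Real.exp_pos _

theorem gaussianWeight_le_one (ε : ℝ) (z x : E) : gaussianWeight ε z x ≤ 1 :=
  Real.exp_le_one_iff.2 <| div_nonpos_of_nonpos_of_nonneg (by simp) (by positivity)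

theorem continuous_gaussianWeight (ε : ℝ) (z : E) : Continuous (gaussianWeight ε z) := by
  unfold gaussianWeight
  fun_prop

theorem hasFDerivAt_gaussianWeight [InnerProductSpace ℝ E] (ε : ℝ) (x z : E) :
    HasFDerivAt (fun w => gaussianWeight ε w x)
      (innerSL ℝ (((ε ^ 2)⁻¹ * gaussianWeight ε z x) • (x - z))) z := by
  have h := (((hasFDerivAt_id z).sub_const x).norm_sq.const_mul (-(2 * ε ^ 2)⁻¹)).exp
  refine (h.congr_fderiv ?_).congr_of_eventuallyEq (.of_forall fun w => ?_)
  · ext y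
    simp only [gaussianWeight, smul_apply, innerSL_apply_apply, ContinuousLinearMap.id_apply,
      ContinuousLinearMap.comp_apply, id, smul_eq_mul, real_inner_smul_left]
    rw [← neg_sub z x, inner_neg_left]
    ring_nf
  · simp only [gaussianWeight, id]
    ring_nf

end GaussianWeight

section Smoothing

variable {E : Type*} [NormedAddCommGroup E] [MeasurableSpace E] [BorelSpace E]
  {μ : Measure E} {p : E → ℝ} (ε : ℝ)

theorem MeasureTheory.Integrable.mul_gaussianWeight (hp : Integrable p μ) (z : E) :
    Integrable (fun x => p x * gaussianWeight ε z x) μ :=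
  hp.mul_bdd (continuous_gaussianWeight ε z).aestronglyMeasurable <| .of_forall fun x => by
    rw [Real.norm_of_nonneg (gaussianWeight_pos ε z x).le]
    exact gaussianWeight_le_one ε z x

theorem MeasureTheory.Integrable.mul_gaussianWeight_smul [SecondCountableTopology E]
    [NormedSpace ℝ E] (hp : Integrable p μ) (hmom : Integrable (fun x => ‖x‖ * p x) μ) (z : E) :
    Integrable (fun x => (p x * gaussianWeight ε z x) • x) μ := by
  refine hmom.norm.mono' ((hp.mul_gaussianWeight ε z).aestronglyMeasurable.smul
    aestronglyMeasurable_id) (.of_forall fun x => ?_)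
  rw [norm_smul, norm_mul, norm_mul, norm_norm, Real.norm_of_nonneg (gaussianWeight_pos ε z x).le,
    mul_right_comm, mul_comm ‖x‖]
  exact mul_le_of_le_one_right (by positivity) (gaussianWeight_le_one ε z x)

theorem integral_mul_gaussianWeight_pos (hnonneg : ∀ x, 0 ≤ p x) (hp : Integrable p μ)
    (hp_pos : 0 < ∫ x, p x ∂μ) (z : E) : 0 < ∫ x, p x * gaussianWeight ε z x ∂μ := by
  have hsupport : Function.support (fun x => p x * gaussianWeight ε z x) = Function.support p :=
    Function.support_mul_of_ne_zero_right p fun x => (gaussianWeight_pos ε z x).ne'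
  rw [integral_pos_iff_support_of_nonneg hnonneg hp] at hp_pos
  rw [integral_pos_iff_support_of_nonneg (fun x => mul_nonneg (hnonneg x)
    (gaussianWeight_pos ε z x).le) (hp.mul_gaussianWeight ε z), hsupport]
  exact hp_pos

end Smoothing

section Derivative

variable {E : Type*} [NormedAddCommGroup E] [InnerProductSpace ℝ E] [CompleteSpace E]
  [SecondCountableTopology E] [MeasurableSpace E] [BorelSpace E]
  {μ : Measure E} {p : E → ℝ} (ε : ℝ)

theorem hasFDerivAt_integral_mul_gaussianWeight (hp : Integrable p μ)
    (hmom : Integrable (fun x => ‖x‖ * p x) μ) (z : E) :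
    HasFDerivAt (fun w => ∫ x, p x * gaussianWeight ε w x ∂μ)
      (innerSL ℝ (∫ x, ((ε ^ 2)⁻¹ * (p x * gaussianWeight ε z x)) • (x - z) ∂μ)) z := by
  have hG_int : Integrable (fun x => ((ε ^ 2)⁻¹ * (p x * gaussianWeight ε z x)) • (x - z)) μ :=
    (((hp.mul_gaussianWeight_smul ε hmom z).sub ((hp.mul_gaussianWeight ε z).smul_const z)).smul
      (ε ^ 2)⁻¹).congr (.of_forall fun x => by simp only [Pi.smul_apply, Pi.sub_apply]; module)
  rw [← (innerSL ℝ).integral_comp_comm hG_int]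
  refine hasFDerivAt_integral_of_dominated_of_fderiv_le
    (F' := fun w x => innerSL ℝ (((ε ^ 2)⁻¹ * (p x * gaussianWeight ε w x)) • (x - w)))
    (bound := fun x => (ε ^ 2)⁻¹ * (‖‖x‖ * p x‖ + (‖z‖ + 1) * ‖p x‖))
    (Metric.ball_mem_nhds z one_pos) (.of_forall fun w => (hp.mul_gaussianWeight ε w).1)
    (hp.mul_gaussianWeight ε z) ((innerSL ℝ).continuous.comp_aestronglyMeasurable hG_int.1)
    (.of_forall fun x w hw => ?_) ((hmom.norm.add (hp.norm.const_mul _)).const_mul _)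
    (.of_forall fun x w _ => ?_)
  · have hxw : ‖x - w‖ ≤ ‖x‖ + (‖z‖ + 1) := by
      linarith [mem_ball_iff_norm.1 hw, norm_sub_le x w, norm_le_norm_add_norm_sub' w z]
    rw [innerSL_apply_norm, norm_smul, norm_mul, norm_mul, norm_inv, norm_mul, norm_norm,
      Real.norm_of_nonneg (sq_nonneg ε), Real.norm_of_nonneg (gaussianWeight_pos ε w x).le]
    calc (ε ^ 2)⁻¹ * (‖p x‖ * gaussianWeight ε w x) * ‖x - w‖
        ≤ (ε ^ 2)⁻¹ * (‖p x‖ * 1) * (‖x‖ + (‖z‖ + 1)) := by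
          gcongr
          exact gaussianWeight_le_one ε w x
      _ = (ε ^ 2)⁻¹ * (‖x‖ * ‖p x‖ + (‖z‖ + 1) * ‖p x‖) := by ring
  · refine ((hasFDerivAt_gaussianWeight ε x w).const_mul (p x)).congr_fderiv ?_
    ext y
    simp only [smul_apply, innerSL_apply_apply, real_inner_smul_left, smul_eq_mul]
    ring

theorem hasGradientAt_integral_mul_gaussianWeight (hp : Integrable p μ)
    (hmom : Integrable (fun x => ‖x‖ * p x) μ) (z : E) :
    HasGradientAt (fun w => ∫ x, p x * gaussianWeight ε w x ∂μ)
      ((ε ^ 2)⁻¹ • ((∫ x, (p x * gaussianWeight ε z x) • x ∂μ)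
        - (∫ x, p x * gaussianWeight ε z x ∂μ) • z)) z := by
  have hv : (ε ^ 2)⁻¹ • ((∫ x, (p x * gaussianWeight ε z x) • x ∂μ)
      - (∫ x, p x * gaussianWeight ε z x ∂μ) • z)
      = ∫ x, ((ε ^ 2)⁻¹ * (p x * gaussianWeight ε z x)) • (x - z) ∂μ := by
    rw [← integral_smul_const, ← integral_sub (hp.mul_gaussianWeight_smul ε hmom z)
      ((hp.mul_gaussianWeight ε z).smul_const z), ← integral_smul]
    congr with x
    module
  exact hasGradientAt_iff_hasFDerivAt.2 (hv ▸ hasFDerivAt_integral_mul_gaussianWeight ε hp hmom z)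

end Derivative

theorem smoothedDensity_eq {d : ℕ} (p : EuclideanSpace ℝ (Fin d) → ℝ) (ε : ℝ) :
    smoothedDensity p ε =
      fun z => (2 * Real.pi * ε ^ 2) ^ (-(d : ℝ) / 2) * ∫ x, p x * gaussianWeight ε z x := by
  ext z
  rw [smoothedDensity, ← integral_const_mul]
  congr with x
  rw [gaussianWeight]
  ring

theorem mmseDenoiser_eq {d : ℕ} (p : EuclideanSpace ℝ (Fin d) → ℝ) (ε : ℝ)
    (z : EuclideanSpace ℝ (Fin d)) :
    mmseDenoiser p ε z = (∫ x, p x * gaussianWeight ε z x)⁻¹ •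
      ∫ x, (p x * gaussianWeight ε z x) • x :=
  rfl

theorem tweedie_formula_general {d : ℕ} (p : EuclideanSpace ℝ (Fin d) → ℝ) (ε : ℝ) (hε : 0 < ε)
    (hnonneg : ∀ x, 0 ≤ p x)
    (hint : Integrable p) (hnorm : ∫ x, p x = 1)
    (hmom : Integrable (fun x => ‖x‖ * p x)) :
    ∀ z, gradient (fun w => Real.log (smoothedDensity p ε w)) z
      = (ε ^ 2)⁻¹ • (mmseDenoiser p ε z - z) := by
  intro z
  rw [smoothedDensity_eq, mmseDenoiser_eq]
  set C := (2 * Real.pi * ε ^ 2) ^ (-(d : ℝ) / 2)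
  set g := ∫ x, p x * gaussianWeight ε z x
  have hC : 0 < C := by positivity
  have hg : 0 < g := integral_mul_gaussianWeight_pos ε hnonneg hint (by simp [hnorm]) z
  have hgrad := ((hasGradientAt_integral_mul_gaussianWeight ε hint hmom z).const_mul C).log
    (by positivity)
  rw [hgrad.gradient, smul_smul, show (C * g)⁻¹ * C = g⁻¹ by field_simp, smul_comm, smul_sub,
    smul_smul, inv_mul_cancel₀ hg.ne', one_smul]

/-- Tweedie's formula. -/
theorem tweedie_formula {d : ℕ} (p : EuclideanSpace ℝ (Fin d) → ℝ) (ε : ℝ) (hε : 0 < ε)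
    (hmeas : Measurable p) (hnonneg : ∀ x, 0 ≤ p x)
    (hint : Integrable p) (hnorm : ∫ x, p x = 1)
    (hmom : Integrable (fun x => ‖x‖ * p x)) :
    ∀ z, gradient (fun w => Real.log (smoothedDensity p ε w)) z
      = (ε ^ 2)⁻¹ • (mmseDenoiser p ε z - z) :=
  tweedie_formula_general p ε hε hnonneg hint hnorm hmom
end
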